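/- As β → 0⁺, the first eigenvalue of the Robin Laplacian on (0,1) with parameter β satisfies λ₁(β) = 2β + O(β²). -/

import Mathlib

/-!
With `s = √λ₁(β)` the secular equation reads `β = s tan (s/2)`. The bounds
`x < tan x ≤ x + x³` for `0 < x ≤ 1` squeeze it to `s²/2 < β ≤ s²/2 + s⁴/8`,
hence `0 < 2β - λ₁ ≤ λ₁²/4 < β²` once `β < 1`.
-/

open Real Filter Asymptotics

theorem Real.tan_le_self_add_pow_three {x : ℝ} (hx0 : 0 ≤ x) (hx1 : x ≤ 1) :
    tan x ≤ x + x ^ 3 := by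
  have hcos : 0 < cos x :=
    cos_pos_of_mem_Ioo ⟨by linarith [pi_pos], by linarith [pi_gt_three]⟩
  rw [tan_eq_sin_div_cos, div_le_iff₀ hcos]
  have hcos_ge : (x + x ^ 3) * (1 - x ^ 2 / 2) ≤ (x + x ^ 3) * cos x :=
    mul_le_mul_of_nonneg_left one_sub_sq_div_two_le_cos (by positivity)
  nlinarith [sin_le hx0, mul_nonneg (pow_nonneg hx0 3) (by nlinarith : 0 ≤ 1 - x ^ 2)]

theorem Real.sq_div_two_lt_mul_tan_half {s : ℝ} (hs0 : 0 < s) (hspi : s < π) :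
    s ^ 2 / 2 < s * tan (s / 2) := by
  have htan : s / 2 < tan (s / 2) := lt_tan (by linarith) (by linarith)
  nlinarith

theorem Real.mul_tan_half_le {s : ℝ} (hs0 : 0 ≤ s) (hs2 : s ≤ 2) :
    s * tan (s / 2) ≤ s ^ 2 / 2 + s ^ 4 / 8 := by
  calc s * tan (s / 2) ≤ s * (s / 2 + (s / 2) ^ 3) :=
        mul_le_mul_of_nonneg_left (tan_le_self_add_pow_three (by linarith) (by linarith)) hs0
    _ = s ^ 2 / 2 + s ^ 4 / 8 := by ring

theorem abs_sq_sub_two_mul_le_sq_of_eq_mul_tan_half {s β : ℝ} (hs0 : 0 < s) (hspi : s < π)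
    (hβ : β = s * tan (s / 2)) (hβ1 : β < 1) :
    |s ^ 2 - 2 * β| ≤ β ^ 2 := by
  have hlower : s ^ 2 / 2 < β := hβ ▸ sq_div_two_lt_mul_tan_half hs0 hspi
  have hs2 : s ≤ 2 := by nlinarith
  have hupper : β ≤ s ^ 2 / 2 + s ^ 4 / 8 := hβ ▸ mul_tan_half_le hs0.le hs2
  rw [abs_le]
  constructor <;> nlinarith

theorem robin_first_eigenvalue_asymptotics
    (lam1 : ℝ → ℝ)
    (h : ∀ β : ℝ, 0 < β → lam1 β ∈ Set.Ioo 0 (Real.pi ^ 2) ∧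
      β = Real.sqrt (lam1 β) * Real.tan (Real.sqrt (lam1 β) / 2)) :
    (fun β => lam1 β - 2 * β) =O[nhdsWithin 0 (Set.Ioi 0)] (fun β => β ^ 2) := by
  refine IsBigO.of_bound 1 ?_
  filter_upwards [Ioo_mem_nhdsGT (by norm_num : (0 : ℝ) < 1)] with β ⟨hβ0, hβ1⟩
  obtain ⟨⟨hlam0, hlampi⟩, heq⟩ := h β hβ0
  have hsqrt_lt : √(lam1 β) < π := (sqrt_lt' pi_pos).mpr hlampi
  have hbound := abs_sq_sub_two_mul_le_sq_of_eq_mul_tan_half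
    (sqrt_pos.mpr hlam0) hsqrt_lt heq hβ1
  rw [sq_sqrt hlam0.le] at hbound
  simpa only [norm_eq_abs, one_mul, abs_pow, sq_abs] using hbound
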